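/- arXiv:0901.4277 — 6 statements merged into one kernel-verified Lean document; each statement's English description precedes it below -/
import Mathlib

section
/- Let k be a field, n ≥ 1, and let J be an ideal of the polynomial ring k[x_1, x_2, ..., x_n] containing a polynomial f = g·x_1 + h, where g and h are polynomials not involving the variable x_1 and g is a non-zero divisor modulo J. Then J is a prime ideal if and only if the elimination ideal J ∩ k[x_2, ..., x_n] is a prime ideal. -/
/-!
Modulo `J` we have `g·x₁ ≡ -h`, so multiplying any polynomial by a suitable power of `g`
makes it congruent to a polynomial not involving `x₁`. Since `g` is a non-zero divisor
modulo `J`, a factorisation `p·q ∈ J` can therefore be transported into the elimination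
ideal, where primality applies, and brought back by cancelling the power of `g`.
-/

open MvPolynomial

theorem Ideal.isPrime_iff_isPrime_comap_of_exists_pow_mul_eq {A B F : Type*} [CommRing A]
    [CommRing B] [FunLike F A B] [RingHomClass F A B] {φ : F} {J : Ideal B} {s : B}
    (hs : Ideal.Quotient.mk J s ∈ nonZeroDivisors (B ⧸ J))
    (hφ : ∀ b, ∃ (d : ℕ) (a : A),
      Ideal.Quotient.mk J (s ^ d * b) = Ideal.Quotient.mk J (φ a)) :
    J.IsPrime ↔ (J.comap φ).IsPrime := by
  refine ⟨fun hJ ↦ hJ.comap φ, fun hI ↦ ⟨fun hJ ↦ hI.ne_top (by rw [hJ, Ideal.comap_top]), ?_⟩⟩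
  have cancel {b : B} {d : ℕ} {a : A} (hb : Ideal.Quotient.mk J (s ^ d * b) =
      Ideal.Quotient.mk J (φ a)) (ha : a ∈ J.comap φ) : b ∈ J := by
    rw [Ideal.mem_comap, ← Ideal.Quotient.eq_zero_iff_mem, ← hb, map_mul, map_pow] at ha
    exact Ideal.Quotient.eq_zero_iff_mem.mp
      (mem_nonZeroDivisors_iff_left.mp (pow_mem hs d) _ ha)
  intro p q hpq
  obtain ⟨d, a, hp⟩ := hφ p
  obtain ⟨e, c, hq⟩ := hφ q
  have hac : a * c ∈ J.comap φ := by
    rw [Ideal.mem_comap, ← Ideal.Quotient.eq_zero_iff_mem, map_mul, map_mul, ← hp, ← hq,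
      ← map_mul, Ideal.Quotient.eq_zero_iff_mem, mul_mul_mul_comm]
    exact J.mul_mem_left _ hpq
  exact (hI.mem_or_mem hac).imp (cancel hp) (cancel hq)

theorem MvPolynomial.exists_mk_pow_mul_eq_mk_rename_some {R σ : Type*} [CommRing R]
    {J : Ideal (MvPolynomial (Option σ) R)} {g h : MvPolynomial σ R}
    (hf : rename some g * X none + rename some h ∈ J) (p : MvPolynomial (Option σ) R) :
    ∃ (d : ℕ) (q : MvPolynomial σ R),
      Ideal.Quotient.mk J (rename some g ^ d * p) = Ideal.Quotient.mk J (rename some q) := by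
  set π := Ideal.Quotient.mk J
  have hf' : π (rename some g) * π (X none) + π (rename some h) = 0 := by
    rw [← map_mul, ← map_add, Ideal.Quotient.eq_zero_iff_mem]
    exact hf
  induction p using MvPolynomial.induction_on with
  | C a => exact ⟨0, C a, by simp⟩
  | add p p' hp hp' =>
    obtain ⟨d, q, hq⟩ := hp
    obtain ⟨d', q', hq'⟩ := hp'
    refine ⟨d + d', g ^ d' * q + g ^ d * q', ?_⟩
    simp only [map_add, map_mul, map_pow] at hq hq' ⊢
    linear_combination π (rename some g) ^ d' * hq + π (rename some g) ^ d * hq'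
  | mul_X p i hp =>
    obtain ⟨d, q, hq⟩ := hp
    simp only [map_mul, map_pow] at hq
    cases i with
    | none =>
      refine ⟨d + 1, q * -h, ?_⟩
      simp only [map_mul, map_pow, map_neg]
      linear_combination π (rename some g) ^ d * π p * hf' - π (rename some h) * hq
    | some j =>
      refine ⟨d, q * X j, ?_⟩
      simp only [map_mul, map_pow, rename_X]
      linear_combination π (X (some j)) * hq

/-- **Stillman's lemma.** Let `k` be a field and `k[x₁,…,xₙ]` (here with `n = m + 1 ≥ 1`,
the variable `x₁` being indexed by `none : Option (Fin m)` and the remaining variables by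
`some i`). Suppose `J` contains `f = g·x₁ + h` where `g, h` do not involve `x₁` and `g` is a
non-zero divisor modulo `J`. Then `J` is prime iff the elimination ideal
`J ∩ k[x₂,…,xₙ]` is prime. -/
theorem stmt0 (k : Type*) [Field k] (m : ℕ)
    (J : Ideal (MvPolynomial (Option (Fin m)) k))
    (g h : MvPolynomial (Fin m) k)
    (hf : rename (some : Fin m → Option (Fin m)) g * X none
        + rename (some : Fin m → Option (Fin m)) h ∈ J)
    (hg : Ideal.Quotient.mk J (rename (some : Fin m → Option (Fin m)) g)
        ∈ nonZeroDivisors (MvPolynomial (Option (Fin m)) k ⧸ J)) :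
    J.IsPrime ↔ (J.comap (rename (some : Fin m → Option (Fin m)) :
        MvPolynomial (Fin m) k →ₐ[k] MvPolynomial (Option (Fin m)) k)).IsPrime :=
  Ideal.isPrime_iff_isPrime_comap_of_exists_pow_mul_eq hg
    (exists_mk_pow_mul_eq_mk_rename_some hf)
end

section
/- Let k be a field, n ≥ 3, and let a_1,...,a_{n-2}, b_1,...,b_{n-2} be nonzero elements of k. In the polynomial ring R = k[l, e_1,...,e_n, s_1,...,s_n] in 2n+1 variables, the ideal J generated by the n−2 quadric trinomials g_i = s_i·e_i + a_i·s_{n-1}·e_{n-1} + b_i·s_n·e_n (for i = 1,...,n−2) is a prime ideal. -/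
/-!
Write `gᵢ = sᵢeᵢ + cᵢ`, where `cᵢ = aᵢ s_{n-1} e_{n-1} + bᵢ sₙ eₙ` involves none of the variables
`eⱼ, sⱼ` with `j ≤ n - 2`. Adjoining these pairs of variables one at a time, it suffices that for
a domain `D` and `c ≠ 0` the polynomial `e s + c` is prime in `D[e][s]`: it is linear in `s` with
leading coefficient the prime `e`, which does not divide `c`. The constants `cᵢ` stay nonzero
modulo the relations adjoined before them, because `eⱼ ↦ -cⱼ, sⱼ ↦ 1` kills those relations.
-/

open MvPolynomial

/-- Index type for the `2n+1` variables `l, e₁,…,eₙ, s₁,…,sₙ` of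
`R = k[l, e₁, …, eₙ, s₁, …, sₙ]`. -/
abbrev CoxVar (n : ℕ) : Type := Unit ⊕ Fin n ⊕ Fin n

/-- The variable `l`. -/
def lVar (n : ℕ) : CoxVar n := Sum.inl ()

/-- The variable `eᵢ` (0-indexed). -/
def eVar {n : ℕ} (i : Fin n) : CoxVar n := Sum.inr (Sum.inl i)

/-- The variable `sᵢ` (0-indexed). -/
def sVar {n : ℕ} (i : Fin n) : CoxVar n := Sum.inr (Sum.inr i)

/-- The quadric trinomial `gᵢ = sᵢ·eᵢ + aᵢ·s_{n-1}·e_{n-1} + bᵢ·sₙ·eₙ`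
(1-based indexing as in the paper; here `i : Fin (n-2)` is 0-based). -/
noncomputable def coxRel (k : Type*) [Field k] (n : ℕ) (hn : 3 ≤ n) (a b : Fin (n - 2) → k)
    (i : Fin (n - 2)) : MvPolynomial (CoxVar n) k :=
  X (sVar (Fin.castLE (by omega) i)) * X (eVar (Fin.castLE (by omega) i))
    + C (a i) * X (sVar ⟨n - 2, by omega⟩) * X (eVar ⟨n - 2, by omega⟩)
    + C (b i) * X (sVar ⟨n - 1, by omega⟩) * X (eVar ⟨n - 1, by omega⟩)

open scoped Polynomial

namespace Polynomial

variable {B : Type*} [CommRing B]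

/-- Pseudo-division by `C e * X + C c`: with `F = f.scaleRoots e` one has `e ^ deg f * f = F (e X)`,
and `F (e X) ≡ F (-c)` modulo `e X + c`. -/
theorem C_mul_X_add_C_dvd_C_pow_mul_sub_C (e c : B) (f : B[X]) :
    C e * X + C c ∣ C e ^ f.natDegree * f - C ((f.scaleRoots e).eval (-c)) := by
  have h := sub_dvd_eval_sub (C e * X) (C (-c)) ((f.scaleRoots e).map C)
  rwa [eval_map, eval_map, scaleRoots_eval₂_mul, eval₂_C_X, eval₂_at_apply, C_neg,
    sub_neg_eq_add] at h

theorem prime_C_mul_X_add_C [IsDomain B] {e c : B} (he : Prime e) (hc : ¬ e ∣ c) :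
    Prime (C e * X + C c) := by
  set p := C e * X + C c
  have hp : p.natDegree = 1 := natDegree_linear he.ne_zero
  have hCe : Prime (C e) := prime_C_iff.mpr he
  have hCe_not_dvd : ¬ C e ∣ p := fun h => hc (by simpa [p] using (C_dvd_iff_dvd_coeff _ _).mp h 0)
  have dvd_of_dvd_C_pow_mul (N : ℕ) (h : B[X]) : p ∣ C e ^ N * h → p ∣ h := by
    induction N generalizing h with
    | zero => simp
    | succ N ih =>
      intro hd
      rw [pow_succ', mul_assoc] at hd
      exact ih _ ((hCe.left_dvd_or_dvd_right_of_dvd_mul hd).resolve_left hCe_not_dvd)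
  refine ⟨fun h => by simp [h] at hp, fun hu => by simp [natDegree_eq_zero_of_isUnit hu] at hp,
    fun f g hfg => ?_⟩
  have hf := C_mul_X_add_C_dvd_C_pow_mul_sub_C e c f
  have hg := C_mul_X_add_C_dvd_C_pow_mul_sub_C e c g
  set r := (f.scaleRoots e).eval (-c)
  set s := (g.scaleRoots e).eval (-c)
  have hrs : p ∣ C (r * s) := by
    have : C (r * s) = C e ^ f.natDegree * C e ^ g.natDegree * (f * g)
        - (C e ^ f.natDegree * f - C r) * (C e ^ g.natDegree * g)
        - C r * (C e ^ g.natDegree * g - C s) := by rw [C_mul]; ring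
    rw [this]
    exact dvd_sub (dvd_sub (hfg.mul_left _) (hf.mul_right _)) (hg.mul_left _)
  have hrs0 : r * s = 0 :=
    C_eq_zero.mp (eq_zero_of_dvd_of_natDegree_lt hrs (by rw [natDegree_C, hp]; exact one_pos))
  rcases mul_eq_zero.mp hrs0 with h | h
  · exact .inl (dvd_of_dvd_C_pow_mul _ _ (by simpa [h] using hf))
  · exact .inr (dvd_of_dvd_C_pow_mul _ _ (by simpa [h] using hg))

theorem prime_C_X_mul_X_add_C_C [IsDomain B] {c : B} (hc : c ≠ 0) :
    Prime (C X * X + C (C c) : B[X][X]) :=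
  prime_C_mul_X_add_C prime_X (by rwa [X_dvd_iff, coeff_C_zero])

theorem isPrime_span_C_X_mul_X_add_C_sup_map_map {A : Type*} [CommRing A] {I : Ideal A}
    [I.IsPrime] {a : A} (ha : a ∉ I) :
    (Ideal.span {C X * X + C (C a)} ⊔ (I.map C).map C : Ideal A[X][X]).IsPrime := by
  set π : A[X][X] →+* (A ⧸ I)[X][X] := mapRingHom (mapRingHom (Ideal.Quotient.mk I))
  have hπ : Function.Surjective π :=
    map_surjective _ (map_surjective _ Ideal.Quotient.mk_surjective)
  have hker : RingHom.ker π = (I.map C).map C := by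
    rw [ker_mapRingHom, ker_mapRingHom, Ideal.mk_ker]
  have hG : π (C X * X + C (C a)) = C X * X + C (C (Ideal.Quotient.mk I a)) := by simp [π]
  have hprime : Prime (π (C X * X + C (C a))) := by
    rw [hG]
    exact prime_C_X_mul_X_add_C_C (by rwa [Ne, Ideal.Quotient.eq_zero_iff_mem])
  have := (Ideal.span_singleton_prime hprime.ne_zero).mpr hprime
  have : Ideal.span {C X * X + C (C a)} ⊔ (I.map C).map C
      = (Ideal.span {π (C X * X + C (C a))}).comap π := by
    rw [← Set.image_singleton (f := π), ← Ideal.map_span, Ideal.comap_map_of_surjective _ hπ,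
      ← RingHom.ker_eq_comap_bot, hker]
  rw [this]
  exact Ideal.comap_isPrime _ _

end Polynomial

theorem Ideal.isPrime_span_range_comp {ι R S F : Type*} [CommRing R] [CommRing S]
    [EquivLike F R S] [RingEquivClass F R S] (f : F) {g : ι → R}
    (h : (Ideal.span (Set.range g)).IsPrime) :
    (Ideal.span (Set.range (f ∘ g))).IsPrime := by
  rw [Set.range_comp, ← Ideal.map_span]
  exact Ideal.map_isPrime_of_equiv f

def Equiv.optionSumOptionEquiv (κ : Type*) : Option κ ⊕ Option κ ≃ Option (Option (κ ⊕ κ)) where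
  toFun
    | .inl none => some none
    | .inr none => none
    | .inl (some i) => some (some (.inl i))
    | .inr (some i) => some (some (.inr i))
  invFun
    | none => .inr none
    | some none => .inl none
    | some (some (.inl i)) => .inl (some i)
    | some (some (.inr i)) => .inr (some i)
  left_inv := by rintro ((_ | _) | (_ | _)) <;> rfl
  right_inv := by rintro (_ | _ | _ | _) <;> rfl

namespace MvPolynomial

variable {B ι : Type*} [CommRing B]

noncomputable def pairRel (c : ι → B) (i : ι) : MvPolynomial (ι ⊕ ι) B :=
  X (.inl i) * X (.inr i) + C (c i)

theorem C_notMem_span_range_pairRel {c : ι → B} {b : B} (hb : b ≠ 0) :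
    C b ∉ Ideal.span (Set.range (pairRel c)) := by
  let φ : MvPolynomial (ι ⊕ ι) B →ₐ[B] B := aeval (Sum.elim (fun i => -c i) 1)
  have hφ : Ideal.span (Set.range (pairRel c)) ≤ RingHom.ker φ :=
    Ideal.span_le.mpr (by rintro _ ⟨i, rfl⟩; simp [pairRel, φ])
  exact fun h => hb (by simpa [φ] using hφ h)

theorem isPrime_span_range_pairRel [IsDomain B] [Finite ι] {c : ι → B} (hc : ∀ i, c i ≠ 0) :
    (Ideal.span (Set.range (pairRel c))).IsPrime := by
  revert c
  induction ι using Finite.induction_empty_option with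
  | of_equiv e ih =>
    intro c hc
    have hpair : ⇑(renameEquiv B (e.sumCongr e)) ∘ pairRel (c ∘ e) = pairRel c ∘ e := by
      ext1 i; simp [pairRel]
    rw [← e.surjective.range_comp, ← hpair]
    exact Ideal.isPrime_span_range_comp _ (ih fun i => hc (e i))
  | h_empty =>
    intro c _
    rw [Set.range_eq_empty, Ideal.span_empty]
    exact Ideal.isPrime_bot
  | @h_option κ _ ih =>
    intro c hc
    let Φ : MvPolynomial (Option κ ⊕ Option κ) B ≃ₐ[B] (MvPolynomial (κ ⊕ κ) B)[X][X] :=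
      (renameEquiv B (Equiv.optionSumOptionEquiv κ)).trans
        ((optionEquivLeft B _).trans (Polynomial.mapAlgEquiv (optionEquivLeft B _)))
    have hnone : Φ (pairRel c none) =
        Polynomial.C Polynomial.X * Polynomial.X + Polynomial.C (Polynomial.C (C (c none))) := by
      simp [Φ, pairRel, Equiv.optionSumOptionEquiv]
    have hsome (i : κ) : Φ (pairRel c (some i)) =
        Polynomial.C (Polynomial.C (pairRel (c ∘ some) i)) := by
      simp [Φ, pairRel, Equiv.optionSumOptionEquiv]
    have hmap : (Ideal.span (Set.range (pairRel c))).map Φ =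
        Ideal.span {Polynomial.C Polynomial.X * Polynomial.X
          + Polynomial.C (Polynomial.C (C (c none)))}
        ⊔ ((Ideal.span (Set.range (pairRel (c ∘ some)))).map Polynomial.C).map Polynomial.C := by
      rw [Ideal.map_span, ← Set.range_comp, Option.range_eq, Ideal.span_insert, Ideal.map_span,
        Ideal.map_span, ← Set.range_comp, ← Set.range_comp, Function.comp_apply, hnone]
      congr 3
      ext1 i
      exact hsome i
    have hJ := ih (c := c ∘ some) fun i => hc (some i)
    have hP := Polynomial.isPrime_span_C_X_mul_X_add_C_sup_map_map
      (C_notMem_span_range_pairRel (c := c ∘ some) (hc none))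
    rw [← Ideal.comap_map_of_bijective _ Φ.bijective (I := Ideal.span _), hmap]
    exact Ideal.comap_isPrime _ _

end MvPolynomial

section CoxRing

variable {n : ℕ} (hn : 2 ≤ n)

def finSplitLastTwo : Fin n ≃ Fin (n - 2) ⊕ Fin 2 :=
  (finCongr (by omega)).trans finSumFinEquiv.symm

@[simp]
theorem finSplitLastTwo_castLE (h : n - 2 ≤ n) (i : Fin (n - 2)) :
    finSplitLastTwo hn (Fin.castLE h i) = .inl i :=
  finSumFinEquiv.symm_apply_eq.mpr rfl

@[simp]
theorem finSplitLastTwo_sub_two (h : n - 2 < n) : finSplitLastTwo hn ⟨n - 2, h⟩ = .inr 0 :=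
  finSumFinEquiv.symm_apply_eq.mpr (Fin.ext (by simp))

@[simp]
theorem finSplitLastTwo_sub_one (h : n - 1 < n) : finSplitLastTwo hn ⟨n - 1, h⟩ = .inr 1 :=
  finSumFinEquiv.symm_apply_eq.mpr (Fin.ext (by simp; omega))

/-- Sends `eᵢ, sᵢ` (`i < n - 2`) to `inl (inl i), inl (inr i)`, and `l`, `e_{n-1}, eₙ`,
`s_{n-1}, sₙ` to `inr (inl ())`, `inr (inr (inl _))`, `inr (inr (inr _))`. -/
def coxVarEquiv : CoxVar n ≃ (Fin (n - 2) ⊕ Fin (n - 2)) ⊕ (Unit ⊕ Fin 2 ⊕ Fin 2) :=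
  ((Equiv.sumCongr (.refl Unit) (((finSplitLastTwo hn).sumCongr (finSplitLastTwo hn)).trans
    (Equiv.sumSumSumComm ..))).trans (Equiv.sumAssoc ..).symm).trans
      (((Equiv.sumComm ..).sumCongr (.refl _)).trans (Equiv.sumAssoc ..))

end CoxRing

noncomputable def coxRelConst (k : Type*) [Field k] {m : ℕ} (a b : Fin m → k) (i : Fin m) :
    MvPolynomial (Unit ⊕ Fin 2 ⊕ Fin 2) k :=
  C (a i) * X (.inr (.inr 0)) * X (.inr (.inl 0)) + C (b i) * X (.inr (.inr 1)) * X (.inr (.inl 1))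

theorem coxRelConst_ne_zero (k : Type*) [Field k] {m : ℕ} {a : Fin m → k} (ha : ∀ i, a i ≠ 0)
    (b : Fin m → k) (i : Fin m) : coxRelConst k a b i ≠ 0 := by
  intro h
  have := congrArg (eval (Sum.elim 0 (Sum.elim (Pi.single 0 1) (Pi.single 0 1)))) h
  simp [coxRelConst] at this
  exact ha i this

noncomputable def coxRingEquiv (k : Type*) [Field k] (n : ℕ) (hn : 2 ≤ n) :
    MvPolynomial (CoxVar n) k ≃+*
      MvPolynomial (Fin (n - 2) ⊕ Fin (n - 2)) (MvPolynomial (Unit ⊕ Fin 2 ⊕ Fin 2) k) :=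
  (renameEquiv k (coxVarEquiv hn)).toRingEquiv.trans (sumRingEquiv k _ _)

theorem coxRingEquiv_coxRel (k : Type*) [Field k] (n : ℕ) (hn : 3 ≤ n) (a b : Fin (n - 2) → k)
    (i : Fin (n - 2)) :
    coxRingEquiv k n (by omega) (coxRel k n hn a b i) = pairRel (coxRelConst k a b) i := by
  simp [coxRingEquiv, coxRel, coxVarEquiv, pairRel, coxRelConst, eVar, sVar]
  ring

theorem stmt1_general (k : Type*) [Field k] (n : ℕ) (hn : 3 ≤ n)
    (a b : Fin (n - 2) → k) (ha : ∀ i, a i ≠ 0) :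
    (Ideal.span (Set.range (coxRel k n hn a b))).IsPrime := by
  have hrel : ⇑(coxRingEquiv k n (by omega)).symm ∘ pairRel (coxRelConst k a b) =
      coxRel k n hn a b := by
    ext1 i
    rw [Function.comp_apply, RingEquiv.symm_apply_eq, coxRingEquiv_coxRel]
  rw [← hrel]
  exact Ideal.isPrime_span_range_comp _ (isPrime_span_range_pairRel (coxRelConst_ne_zero k ha b))

/-- For `n ≥ 3` and nonzero scalars `aᵢ, bᵢ`, the ideal
`J = (g₁, …, g_{n-2})` of `R = k[l, e₁, …, eₙ, s₁, …, sₙ]` is prime. -/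
theorem stmt1 (k : Type*) [Field k] (n : ℕ) (hn : 3 ≤ n)
    (a b : Fin (n - 2) → k) (ha : ∀ i, a i ≠ 0) (hb : ∀ i, b i ≠ 0) :
    (Ideal.span (Set.range (coxRel k n hn a b))).IsPrime :=
  stmt1_general k n hn a b ha
end

section
/- Let k be a field, n ≥ 3, and let a_1,...,a_{n-2}, b_1,...,b_{n-2} be nonzero elements of k. In the polynomial ring R = k[l, e_1,...,e_n, s_1,...,s_n], the sequence g_1, g_2, ..., g_{n-2}, where g_i = s_i·e_i + a_i·s_{n-1}·e_{n-1} + b_i·s_n·e_n, is a regular sequence on R (each g_i is a non-zero divisor modulo the ideal generated by the preceding ones, and the quotient R/(g_1,...,g_{n-2}) is nonzero); in particular R/J is a complete intersection ring. -/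
open MvPolynomial

/-!
Each `gᵢ` has the shape `sᵢ·eᵢ + tᵢ`, where neither `sᵢ` nor `eᵢ` occurs in `tᵢ` or in any
earlier `gⱼ`. If a variable `v` occurs neither in the generators of an ideal `I` nor in `p`, `c`,
then splitting off `v` identifies `k[…] ⧸ I` with a polynomial ring `(A ⧸ I')[v]`, and by McCoy's
theorem `v·p + c` is a non-zero divisor there as soon as its coefficient `p` is. Applying this to
`v = eᵢ` (with `p = 1`) and then to `v = sᵢ` (with `p = eᵢ`) shows that `gᵢ` is regular modulo
`(g₁, …, gᵢ₋₁)`. The quotient by all `gᵢ` is nonzero because every `gᵢ` vanishes at the origin.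
-/

open nonZeroDivisors

theorem RingEquiv.map_mem_nonZeroDivisors_iff {R S : Type*} [Semiring R] [Semiring S]
    (e : R ≃+* S) {x : R} : e x ∈ S⁰ ↔ x ∈ R⁰ :=
  ⟨mem_nonZeroDivisors_of_injective e.injective,
    fun h => mem_nonZeroDivisors_of_injective e.symm.injective (by simpa using h)⟩

namespace Polynomial

theorem mk_C_mul_X_add_C_mem_nonZeroDivisors {A : Type*} [CommRing A] {I : Ideal A} {p c : A}
    (hp : Ideal.Quotient.mk (I.map C) (C p) ∈ (A[X] ⧸ I.map C)⁰) :
    Ideal.Quotient.mk (I.map C) (C p * X + C c) ∈ (A[X] ⧸ I.map C)⁰ := by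
  rw [← (Ideal.polynomialQuotientEquivQuotientPolynomial I).symm.map_mem_nonZeroDivisors_iff,
    Ideal.polynomialQuotientEquivQuotientPolynomial_symm_mk] at hp ⊢
  have hp' : Ideal.Quotient.mk I p ∈ (A ⧸ I)⁰ :=
    mem_nonZeroDivisors_of_injective C_injective (by simpa using hp)
  exact mem_nonzeroDivisors_of_coeff_mem 1 (by simpa using hp')

end Polynomial

namespace MvPolynomial

variable {R σ : Type*} [CommRing R] [DecidableEq σ]

noncomputable def equivPolynomialSubtypeNe (v : σ) :
    MvPolynomial σ R ≃ₐ[R] Polynomial (MvPolynomial {b // b ≠ v} R) :=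
  (renameEquiv R (Equiv.optionSubtypeNe v).symm).trans (optionEquivLeft R _)

theorem equivPolynomialSubtypeNe_X_self (v : σ) :
    equivPolynomialSubtypeNe (R := R) v (X v) = Polynomial.X := by
  simp [equivPolynomialSubtypeNe, optionEquivLeft_X_none]

theorem equivPolynomialSubtypeNe_rename (v : σ) (q : MvPolynomial {b // b ≠ v} R) :
    equivPolynomialSubtypeNe v (rename Subtype.val q) = Polynomial.C q := by
  suffices (equivPolynomialSubtypeNe v).toAlgHom.comp (rename Subtype.val) =
      Polynomial.CAlgHom from DFunLike.congr_fun this q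
  refine algHom_ext fun w => ?_
  simp [equivPolynomialSubtypeNe, optionEquivLeft_X_some, w.2]

omit [DecidableEq σ] in
theorem coe_supported_compl_singleton_eq_range_rename (v : σ) :
    (supported R {v}ᶜ : Set (MvPolynomial σ R)) =
      Set.range (rename (Subtype.val : {b // b ≠ v} → σ)) := by
  rw [supported_eq_range_rename]
  rfl

theorem mk_X_mul_add_mem_nonZeroDivisors (v : σ) {G : Set (MvPolynomial σ R)}
    (hG : G ⊆ supported R {v}ᶜ) {p c : MvPolynomial σ R} (hp : p ∈ supported R {v}ᶜ)
    (hc : c ∈ supported R {v}ᶜ)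
    (hN : Ideal.Quotient.mk (Ideal.span G) p ∈ (MvPolynomial σ R ⧸ Ideal.span G)⁰) :
    Ideal.Quotient.mk (Ideal.span G) (X v * p + c) ∈ (MvPolynomial σ R ⧸ Ideal.span G)⁰ := by
  rw [← SetLike.mem_coe, coe_supported_compl_singleton_eq_range_rename] at hp hc
  rw [coe_supported_compl_singleton_eq_range_rename] at hG
  obtain ⟨p, rfl⟩ := hp
  obtain ⟨c, rfl⟩ := hc
  obtain ⟨G, rfl⟩ : ∃ G', rename Subtype.val '' G' = G :=
    ⟨_, Set.image_preimage_eq_of_subset hG⟩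
  let e : MvPolynomial σ R ≃+* Polynomial (MvPolynomial {b // b ≠ v} R) :=
    (equivPolynomialSubtypeNe v).toRingEquiv
  have he : ∀ q, e (rename Subtype.val q) = Polynomial.C q := equivPolynomialSubtypeNe_rename v
  have hX : e (X v) = Polynomial.X := equivPolynomialSubtypeNe_X_self v
  have hmap : (Ideal.span G).map Polynomial.C = (Ideal.span (rename Subtype.val '' G)).map e := by
    rw [Ideal.map_span, Ideal.map_span, ← Set.image_comp]
    exact congrArg _ (Set.image_congr fun q _ => (he q).symm)
  let χ := Ideal.quotientEquiv _ _ e hmap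
  have hχ : ∀ f, χ (Ideal.Quotient.mk _ f) = Ideal.Quotient.mk _ (e f) := fun _ => rfl
  rw [← χ.map_mem_nonZeroDivisors_iff, hχ, he] at hN
  rw [← χ.map_mem_nonZeroDivisors_iff, hχ, map_add, map_mul, he, he, hX, mul_comm]
  exact Polynomial.mk_C_mul_X_add_C_mem_nonZeroDivisors hN

theorem mk_X_mem_nonZeroDivisors (v : σ) {G : Set (MvPolynomial σ R)}
    (hG : G ⊆ supported R {v}ᶜ) :
    Ideal.Quotient.mk (Ideal.span G) (X v) ∈ (MvPolynomial σ R ⧸ Ideal.span G)⁰ := by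
  simpa using mk_X_mul_add_mem_nonZeroDivisors v hG (one_mem _) (zero_mem _)
    (by simpa only [map_one] using one_mem _)

end MvPolynomial

section CoxRel

/-- The variables other than `sᵢ, eᵢ` for `i < n - 2`, i.e. `l, s_{n-1}, e_{n-1}, sₙ, eₙ`. -/
def lastVars (n : ℕ) : Set (CoxVar n) :=
  {v | ∀ i : Fin n, (i : ℕ) < n - 2 → v ≠ sVar i ∧ v ≠ eVar i}

variable {k : Type*} [Field k] {n : ℕ}

theorem lastVars_subset_compl {i : Fin n} (hi : (i : ℕ) < n - 2) {v : CoxVar n}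
    (hv : v = sVar i ∨ v = eVar i) : lastVars n ⊆ {v}ᶜ := by
  rintro w hw rfl
  rcases hv with rfl | rfl
  exacts [(hw i hi).1 rfl, (hw i hi).2 rfl]

theorem coxRel_eq_X_mul_X_add (hn : 3 ≤ n) (a b : Fin (n - 2) → k) (j : Fin (n - 2)) :
    ∃ t ∈ supported k (lastVars n), coxRel k n hn a b j =
      X (sVar (Fin.castLE (Nat.sub_le n 2) j)) * X (eVar (Fin.castLE (Nat.sub_le n 2) j)) + t := by
  have hX : ∀ i : Fin n, n - 2 ≤ i → X (sVar i) * X (eVar i) ∈ supported k (lastVars n) := by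
    intro i hi
    refine mul_mem (X_mem_supported.2 fun m hm => ?_) (X_mem_supported.2 fun m hm => ?_)
    all_goals simp [sVar, eVar, Fin.ext_iff]; omega
  refine ⟨_, add_mem (Subalgebra.smul_mem _ (hX ⟨n - 2, by omega⟩ le_rfl) (a j))
    (Subalgebra.smul_mem _ (hX ⟨n - 1, by omega⟩ (by simp only; omega)) (b j)), ?_⟩
  simp only [coxRel, smul_eq_C_mul]
  ring

theorem image_coxRel_lt_subset_supported_compl (hn : 3 ≤ n) (a b : Fin (n - 2) → k)
    (i : Fin (n - 2)) {v : CoxVar n}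
    (hv : v = sVar (Fin.castLE (Nat.sub_le n 2) i) ∨ v = eVar (Fin.castLE (Nat.sub_le n 2) i)) :
    coxRel k n hn a b '' {j | j < i} ⊆ supported k {v}ᶜ := by
  rintro _ ⟨j, hj : (j : ℕ) < i, rfl⟩
  obtain ⟨t, ht, hrel⟩ := coxRel_eq_X_mul_X_add hn a b j
  rw [hrel]
  refine add_mem (mul_mem (X_mem_supported.2 ?_) (X_mem_supported.2 ?_))
    (supported_mono (lastVars_subset_compl (by simp) hv) ht)
  all_goals rcases hv with rfl | rfl
  all_goals simp [sVar, eVar, Fin.ext_iff]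
  all_goals omega

theorem span_range_coxRel_ne_top (hn : 3 ≤ n) (a b : Fin (n - 2) → k) :
    Ideal.span (Set.range (coxRel k n hn a b)) ≠ ⊤ := by
  refine ne_top_of_le_ne_top (RingHom.ker_ne_top (constantCoeff (σ := CoxVar n) (R := k))) ?_
  refine Ideal.span_le.2 ?_
  rintro _ ⟨j, rfl⟩
  simp [coxRel]

end CoxRel

theorem stmt2_general (k : Type*) [Field k] (n : ℕ) (hn : 3 ≤ n)
    (a b : Fin (n - 2) → k) :
    (∀ i : Fin (n - 2),
      Ideal.Quotient.mk (Ideal.span (coxRel k n hn a b '' {j : Fin (n - 2) | j < i}))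
          (coxRel k n hn a b i) ∈
        nonZeroDivisors (MvPolynomial (CoxVar n) k ⧸
          Ideal.span (coxRel k n hn a b '' {j : Fin (n - 2) | j < i}))) ∧
    Nontrivial (MvPolynomial (CoxVar n) k ⧸
      Ideal.span (Set.range (coxRel k n hn a b))) := by
  refine ⟨fun i => ?_, Ideal.Quotient.nontrivial_iff.2 (span_range_coxRel_ne_top hn a b)⟩
  have hi : (Fin.castLE (Nat.sub_le n 2) i : ℕ) < n - 2 := i.2
  obtain ⟨t, ht, hrel⟩ := coxRel_eq_X_mul_X_add hn a b i
  have he := mk_X_mem_nonZeroDivisors _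
    (image_coxRel_lt_subset_supported_compl hn a b i (Or.inr rfl))
  rw [hrel]
  exact mk_X_mul_add_mem_nonZeroDivisors _
    (image_coxRel_lt_subset_supported_compl hn a b i (Or.inl rfl))
    (X_mem_supported.2 (by simp [sVar, eVar]))
    (supported_mono (lastVars_subset_compl hi (Or.inl rfl)) ht) he

/-- For `n ≥ 3` and nonzero scalars `aᵢ, bᵢ`, the polynomials `g₁, …, g_{n-2}` form a
regular sequence on `R = k[l, e₁, …, eₙ, s₁, …, sₙ]`: each `gᵢ` is a non-zero divisor
modulo the ideal generated by the preceding ones, and the quotient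
`R/(g₁,…,g_{n-2})` is nonzero; in particular `R/J` is a complete intersection ring. -/
theorem stmt2 (k : Type*) [Field k] (n : ℕ) (hn : 3 ≤ n)
    (a b : Fin (n - 2) → k) (ha : ∀ i, a i ≠ 0) (hb : ∀ i, b i ≠ 0) :
    (∀ i : Fin (n - 2),
      Ideal.Quotient.mk (Ideal.span (coxRel k n hn a b '' {j : Fin (n - 2) | j < i}))
          (coxRel k n hn a b i) ∈
        nonZeroDivisors (MvPolynomial (CoxVar n) k ⧸
          Ideal.span (coxRel k n hn a b '' {j : Fin (n - 2) | j < i}))) ∧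
    Nontrivial (MvPolynomial (CoxVar n) k ⧸
      Ideal.span (Set.range (coxRel k n hn a b))) :=
  stmt2_general k n hn a b
end

section
/- Let k be a field, n ≥ 3, and let a_1,...,a_{n-2}, b_1,...,b_{n-2} be nonzero elements of k. In R = k[l, e_1,...,e_n, s_1,...,s_n] let J = (g_1,...,g_{n-2}), where g_i = s_i·e_i + a_i·s_{n-1}·e_{n-1} + b_i·s_n·e_n. Then the elimination ideal J ∩ k[l, e_2,...,e_n, s_2,...,s_n] (the preimage of J under the inclusion of the polynomial ring in the variables other than s_1 and e_1) equals the ideal of k[l, e_2,...,e_n, s_2,...,s_n] generated by g_2,...,g_{n-2}. -/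
/-!
Write `g₁ = s₁e₁ + h` with `h` free of `s₁, e₁`; the other `gᵢ` generate the extension of
`I = (g₂, …, g_{n-2})`. The substitution `e₁ ↦ T`, `s₁ ↦ -h T⁻¹` into Laurent polynomials over the
smaller ring modulo `I` kills `J`, and on the smaller ring it is the reduction modulo `I` followed
by the injective inclusion of constants, so anything of `J` free of `s₁, e₁` already lies in `I`.
-/

open MvPolynomial

/-- The inclusion of the variables `l, e₂, …, eₙ, s₂, …, sₙ` (indexed by `CoxVar (n-1)`)
into the full set of variables `l, e₁, …, eₙ, s₁, …, sₙ`. -/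
def coxEmb (n : ℕ) : CoxVar (n - 1) → CoxVar n :=
  Sum.elim (fun _ => lVar n)
    (Sum.elim (fun i => eVar ⟨(i : ℕ) + 1, by omega⟩)
      (fun i => sVar ⟨(i : ℕ) + 1, by omega⟩))

/-- The trinomial `g_{j+2}` (1-based indexing, `j : Fin (n-3)` 0-based), viewed as an element
of the smaller polynomial ring `k[l, e₂, …, eₙ, s₂, …, sₙ]`. -/
noncomputable def coxRelSmall (k : Type*) [Field k] (n : ℕ) (hn : 3 ≤ n)
    (a b : Fin (n - 2) → k) (j : Fin (n - 3)) : MvPolynomial (CoxVar (n - 1)) k :=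
  X (sVar ⟨(j : ℕ), by omega⟩) * X (eVar ⟨(j : ℕ), by omega⟩)
    + C (a ⟨(j : ℕ) + 1, by omega⟩) * X (sVar ⟨n - 3, by omega⟩) * X (eVar ⟨n - 3, by omega⟩)
    + C (b ⟨(j : ℕ) + 1, by omega⟩) * X (sVar ⟨n - 2, by omega⟩) * X (eVar ⟨n - 2, by omega⟩)

theorem LaurentPolynomial.C_injective {R : Type*} [Semiring R] :
    Function.Injective (LaurentPolynomial.C : R → LaurentPolynomial R) := by
  intro s t hst
  simpa using congrArg (·.coeff 0) hst

namespace MvPolynomial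

variable {R σ τ : Type*} [CommRing R]

theorem comap_rename_span_X_mul_X_add_rename_sup_map_rename {e : τ → σ}
    (he : Function.Injective e) {x y : σ} (hxy : x ≠ y) (hx : x ∉ Set.range e)
    (hy : y ∉ Set.range e) (h : MvPolynomial τ R) (I : Ideal (MvPolynomial τ R)) :
    Ideal.comap (rename e) (Ideal.span {X x * X y + rename e h} ⊔ I.map (rename e)) = I := by
  classical
  refine le_antisymm (fun f hf => ?_) (Ideal.map_le_iff_le_comap.mp le_sup_right)
  set q := Ideal.Quotient.mk I
  let v : σ → LaurentPolynomial (MvPolynomial τ R ⧸ I) :=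
    Function.extend e (fun i => .C (q (X i)))
      (fun s => if s = x then .T 1 else -.C (q h) * .T (-1))
  have hv_rename : ∀ g, aeval v (rename e g) = .C (q g) := by
    intro g
    rw [aeval_rename, show v ∘ e = fun i => .C (q (X i)) from Function.extend_comp he _ _]
    induction g using MvPolynomial.induction_on with
    | C r => rw [aeval_C, LaurentPolynomial.algebraMap_apply]; rfl
    | add p r hp hr => simp [hp, hr]
    | mul_X p i hp => simp [hp]
  have hvx : v x = .T 1 := by
    simp [v, Function.extend_apply' _ _ _ fun ⟨i, hi⟩ => hx ⟨i, hi⟩]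
  have hvy : v y = -.C (q h) * .T (-1) := by
    simp [v, Function.extend_apply' _ _ _ fun ⟨i, hi⟩ => hy ⟨i, hi⟩, hxy.symm]
  have hker : Ideal.span {X x * X y + rename e h} ⊔ I.map (rename e) ≤ RingHom.ker (aeval v) := by
    refine sup_le ?_ ?_
    · rw [Ideal.span_le, Set.singleton_subset_iff, SetLike.mem_coe, RingHom.mem_ker]
      simp only [map_add, map_mul, aeval_X, hvx, hvy, hv_rename]
      have hT : (.T 1 * .T (-1) : LaurentPolynomial (MvPolynomial τ R ⧸ I)) = 1 := by
        rw [← LaurentPolynomial.T_add, add_neg_cancel, LaurentPolynomial.T_zero]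
      linear_combination (-LaurentPolynomial.C (q h)) * hT
    · rw [Ideal.map_le_iff_le_comap]
      intro g hg
      rw [Ideal.mem_comap, RingHom.mem_ker, hv_rename, Ideal.Quotient.eq_zero_iff_mem.mpr hg,
        map_zero]
  have hf' := hker hf
  rw [RingHom.mem_ker, hv_rename, ← map_zero LaurentPolynomial.C] at hf'
  exact Ideal.Quotient.eq_zero_iff_mem.mp (LaurentPolynomial.C_injective hf')

end MvPolynomial

section

variable {n : ℕ}

theorem coxEmb_injective : Function.Injective (coxEmb n) := by
  rintro (_ | (i | i)) (_ | (j | j)) h <;>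
    simp_all [coxEmb, lVar, eVar, sVar, Fin.ext_iff]

theorem eVar_notMem_range_coxEmb (h0 : 0 < n) : eVar ⟨0, h0⟩ ∉ Set.range (coxEmb n) := by
  rintro ⟨_ | (i | i), h⟩ <;> simp [coxEmb, lVar, eVar, sVar] at h

theorem sVar_notMem_range_coxEmb (h0 : 0 < n) : sVar ⟨0, h0⟩ ∉ Set.range (coxEmb n) := by
  rintro ⟨_ | (i | i), h⟩ <;> simp [coxEmb, lVar, eVar, sVar] at h

variable (k : Type*) [Field k] (hn : 3 ≤ n) (a b : Fin (n - 2) → k)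

theorem coxRel_zero :
    coxRel k n hn a b ⟨0, by omega⟩ = X (sVar ⟨0, by omega⟩) * X (eVar ⟨0, by omega⟩)
      + rename (coxEmb n) (C (a ⟨0, by omega⟩) * X (sVar ⟨n - 3, by omega⟩)
        * X (eVar ⟨n - 3, by omega⟩) + C (b ⟨0, by omega⟩) * X (sVar ⟨n - 2, by omega⟩)
        * X (eVar ⟨n - 2, by omega⟩)) := by
  have e1 : (⟨n - 3 + 1, by omega⟩ : Fin n) = ⟨n - 2, by omega⟩ := Fin.mk_eq_mk.mpr (by omega)
  have e2 : (⟨n - 2 + 1, by omega⟩ : Fin n) = ⟨n - 1, by omega⟩ := Fin.mk_eq_mk.mpr (by omega)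
  simp only [coxRel, map_add, map_mul, rename_X, rename_C, coxEmb, eVar, sVar, Sum.elim_inr,
    Sum.elim_inl, Fin.castLE, e1, e2]
  ring

theorem rename_coxEmb_coxRelSmall (j : Fin (n - 3)) :
    rename (coxEmb n) (coxRelSmall k n hn a b j) = coxRel k n hn a b ⟨j + 1, by omega⟩ := by
  have e1 : (⟨n - 3 + 1, by omega⟩ : Fin n) = ⟨n - 2, by omega⟩ := Fin.mk_eq_mk.mpr (by omega)
  have e2 : (⟨n - 2 + 1, by omega⟩ : Fin n) = ⟨n - 1, by omega⟩ := Fin.mk_eq_mk.mpr (by omega)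
  simp only [coxRelSmall, coxRel, map_add, map_mul, rename_X, rename_C, coxEmb, eVar, sVar,
    Sum.elim_inr, Sum.elim_inl, Fin.castLE, e1, e2]

theorem span_range_coxRel :
    Ideal.span (Set.range (coxRel k n hn a b)) = Ideal.span {coxRel k n hn a b ⟨0, by omega⟩}
      ⊔ (Ideal.span (Set.range (coxRelSmall k n hn a b))).map (rename (coxEmb n)) := by
  apply le_antisymm
  · rw [Ideal.span_le]
    rintro _ ⟨⟨_ | m, hm⟩, rfl⟩
    · exact Ideal.mem_sup_left (Ideal.subset_span rfl)
    · rw [← rename_coxEmb_coxRelSmall k hn a b ⟨m, by omega⟩]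
      exact Ideal.mem_sup_right (Ideal.mem_map_of_mem _ (Ideal.subset_span ⟨_, rfl⟩))
  · refine sup_le (Ideal.span_le.mpr ?_) (Ideal.map_le_iff_le_comap.mpr (Ideal.span_le.mpr ?_))
    · rintro _ rfl
      exact Ideal.subset_span ⟨_, rfl⟩
    · rintro _ ⟨j, rfl⟩
      rw [SetLike.mem_coe, Ideal.mem_comap, rename_coxEmb_coxRelSmall]
      exact Ideal.subset_span ⟨_, rfl⟩

end

theorem stmt5_general (k : Type*) [Field k] (n : ℕ) (hn : 3 ≤ n)
    (a b : Fin (n - 2) → k) :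
    Ideal.comap
        (rename (coxEmb n) : MvPolynomial (CoxVar (n - 1)) k →ₐ[k] MvPolynomial (CoxVar n) k)
        (Ideal.span (Set.range (coxRel k n hn a b)))
      = Ideal.span (Set.range (coxRelSmall k n hn a b)) := by
  rw [span_range_coxRel, coxRel_zero]
  exact comap_rename_span_X_mul_X_add_rename_sup_map_rename coxEmb_injective
    (by simp [sVar, eVar]) (sVar_notMem_range_coxEmb _) (eVar_notMem_range_coxEmb _) _ _

/-- For `n ≥ 3` and nonzero scalars `aᵢ, bᵢ`, the elimination ideal
`J ∩ k[l, e₂, …, eₙ, s₂, …, sₙ]`, i.e. the preimage of `J = (g₁, …, g_{n-2})` under the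
inclusion of the polynomial ring in the variables other than `s₁, e₁`, is the ideal
generated by `g₂, …, g_{n-2}`. -/
theorem stmt5 (k : Type*) [Field k] (n : ℕ) (hn : 3 ≤ n)
    (a b : Fin (n - 2) → k) (ha : ∀ i, a i ≠ 0) (hb : ∀ i, b i ≠ 0) :
    Ideal.comap
        (rename (coxEmb n) : MvPolynomial (CoxVar (n - 1)) k →ₐ[k] MvPolynomial (CoxVar n) k)
        (Ideal.span (Set.range (coxRel k n hn a b)))
      = Ideal.span (Set.range (coxRelSmall k n hn a b)) :=
  stmt5_general k n hn a b
end

section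
/- Let n ≥ 2 and let d, l, a_1, ..., a_n be non-negative integers with l ≤ d and d − l ≥ Σ_{i=1}^{n} max(a_i − l, 0). Then the number of tuples (s_1,...,s_n, e_1,...,e_n) of non-negative integers satisfying s_1 + ... + s_n = d − l, s_i + l = e_i + a_i for all i = 1,...,n, and s_i·e_i = 0 for all i = 1,...,n−2, is exactly d + 1 − l − Σ_{i=1}^{n} max(a_i − l, 0). -/
/-!
Given `sᵢ`, the equation `sᵢ + l = eᵢ + aᵢ` determines `eᵢ = sᵢ + l - aᵢ`, which is a natural
number exactly when `sᵢ ≥ aᵢ - l` (truncated), and then `sᵢ eᵢ = 0` forces `sᵢ = aᵢ - l`. So the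
first `n - 2` coordinates are pinned at their lower bounds, and subtracting the lower bounds leaves
a free split of `d - l - Σᵢ (aᵢ - l)` between the last two coordinates: an antidiagonal, with one
more element than that number.
-/

open Finset

section

variable {ι : Type*} [Fintype ι]

lemma add_eq_add_and_mul_eq_zero_iff {s e a l : ℕ} :
    (s + l = e + a ∧ s * e = 0) ↔ (s = a - l ∧ e = s + l - a) := by
  rw [Nat.mul_eq_zero]; omega

def solutionsEquivLowerBounded (d l : ℕ) (a : ι → ℕ) (P : ι → Prop) :
    {se : (ι → ℕ) × (ι → ℕ) // (∑ i, se.1 i) + l = d ∧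
        (∀ i, se.1 i + l = se.2 i + a i) ∧ (∀ i, P i → se.1 i * se.2 i = 0)} ≃
      {s : ι → ℕ // (∑ i, s i) + l = d ∧ ∀ i, a i - l ≤ s i ∧ (P i → s i = a i - l)} where
  toFun se := ⟨se.1.1, se.2.1, fun i => ⟨by have := se.2.2.1 i; omega,
    fun hi => (add_eq_add_and_mul_eq_zero_iff.1 ⟨se.2.2.1 i, se.2.2.2 i hi⟩).1⟩⟩
  invFun s := ⟨(s.1, fun i => s.1 i + l - a i), s.2.1,
    fun i => by dsimp only; have := (s.2.2 i).1; omega,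
    fun i hi => (add_eq_add_and_mul_eq_zero_iff.2 ⟨(s.2.2 i).2 hi, rfl⟩).2⟩
  left_inv se := by
    obtain ⟨⟨s, e⟩, -, hse, -⟩ := se
    ext i
    · rfl
    · have := hse i
      dsimp only at this ⊢
      omega
  right_inv _ := rfl

def lowerBoundedEquivShift (m : ι → ℕ) (c d : ℕ) (hd : c + ∑ i, m i ≤ d) (P : ι → Prop) :
    {s : ι → ℕ // (∑ i, s i) + c = d ∧ ∀ i, m i ≤ s i ∧ (P i → s i = m i)} ≃
      {t : ι → ℕ // ∑ i, t i = d - (c + ∑ i, m i) ∧ ∀ i, P i → t i = 0} where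
  toFun s := ⟨fun i => s.1 i - m i, by
    have hsum : ∑ i, (s.1 i - m i) + ∑ i, m i = ∑ i, s.1 i := by
      rw [← sum_add_distrib]; exact sum_congr rfl fun i _ => Nat.sub_add_cancel (s.2.2 i).1
    have := s.2.1
    beta_reduce
    omega, fun i hi => by simp [(s.2.2 i).2 hi]⟩
  invFun t := ⟨fun i => t.1 i + m i, by rw [sum_add_distrib]; omega,
    fun i => ⟨Nat.le_add_left _ _, fun hi => by simp [t.2.2 i hi]⟩⟩
  left_inv s := Subtype.ext (funext fun i => Nat.sub_add_cancel (s.2.2 i).1)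
  right_inv t := Subtype.ext (funext fun i => Nat.add_sub_cancel _ _)

variable [DecidableEq ι]

def supportedOnPairEquivAntidiagonal {p q : ι} (hpq : p ≠ q) (N : ℕ) (P : ι → Prop)
    (hP : ∀ i, P i ↔ i ≠ p ∧ i ≠ q) :
    {t : ι → ℕ // ∑ i, t i = N ∧ ∀ i, P i → t i = 0} ≃ antidiagonal N where
  toFun t := ⟨(t.1 p, t.1 q), HasAntidiagonal.mem_antidiagonal.2 <|
    (Fintype.sum_eq_add p q hpq fun i hi => t.2.2 i ((hP i).2 hi)).symm.trans t.2.1⟩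
  invFun x := ⟨Pi.single p x.1.1 + Pi.single q x.1.2, by
    simpa [sum_add_distrib] using HasAntidiagonal.mem_antidiagonal.1 x.2, fun i hi => by
    simp [((hP i).1 hi).1, ((hP i).1 hi).2]⟩
  left_inv t := by
    ext i
    by_cases hip : i = p
    · subst hip; simp [hpq]
    by_cases hiq : i = q
    · subst hiq; simp [Ne.symm hpq]
    simp [hip, hiq, t.2.2 i ((hP i).2 ⟨hip, hiq⟩)]
  right_inv x := by ext; simp [hpq]

theorem card_supportedOnPair {p q : ι} (hpq : p ≠ q) (N : ℕ) (P : ι → Prop)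
    (hP : ∀ i, P i ↔ i ≠ p ∧ i ≠ q) :
    Nat.card {t : ι → ℕ // ∑ i, t i = N ∧ ∀ i, P i → t i = 0} = N + 1 := by
  rw [Nat.card_congr (supportedOnPairEquivAntidiagonal hpq N P hP), Nat.card_eq_finsetCard,
    Nat.card_antidiagonal]

end

theorem stmt8_general (n : ℕ) (hn : 2 ≤ n) (d l : ℕ) (a : Fin n → ℕ)
    (h : ∑ i, max ((a i : ℤ) - (l : ℤ)) 0 ≤ (d : ℤ) - (l : ℤ)) :
    (Nat.card {se : (Fin n → ℕ) × (Fin n → ℕ) //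
        (∑ i, se.1 i) + l = d ∧
        (∀ i, se.1 i + l = se.2 i + a i) ∧
        (∀ i : Fin n, (i : ℕ) < n - 2 → se.1 i * se.2 i = 0)} : ℤ)
      = (d : ℤ) + 1 - (l : ℤ) - ∑ i, max ((a i : ℤ) - (l : ℤ)) 0 := by
  have hmax : ∀ i, max ((a i : ℤ) - l) 0 = ((a i - l : ℕ) : ℤ) := fun i => by omega
  simp only [hmax, ← Nat.cast_sum] at h ⊢
  have hd : l + ∑ i, (a i - l) ≤ d := by omega
  let p : Fin n := ⟨n - 2, by omega⟩
  let q : Fin n := ⟨n - 1, by omega⟩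
  have hP : ∀ i : Fin n, (i : ℕ) < n - 2 ↔ i ≠ p ∧ i ≠ q := fun i => by
    simp only [p, q, ne_eq, Fin.ext_iff]; omega
  rw [Nat.card_congr ((solutionsEquivLowerBounded d l a _).trans
      (lowerBoundedEquivShift _ l d hd _)),
    card_supportedOnPair (p := p) (q := q) (by simp [p, q, Fin.ext_iff]; omega) _ _ hP]
  omega

/-- Let `n ≥ 2` and let `d, l, a₁, …, aₙ` be non-negative integers with `l ≤ d` and
`d − l ≥ Σᵢ max(aᵢ − l, 0)`. Then the number of tuples `(s₁,…,sₙ,e₁,…,eₙ)` of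
non-negative integers with `s₁ + ⋯ + sₙ = d − l`, `sᵢ + l = eᵢ + aᵢ` for all `i`, and
`sᵢ·eᵢ = 0` for `i = 1, …, n−2`, is exactly `d + 1 − l − Σᵢ max(aᵢ − l, 0)`. -/
theorem stmt8 (n : ℕ) (hn : 2 ≤ n) (d l : ℕ) (a : Fin n → ℕ) (hl : l ≤ d)
    (h : ∑ i, max ((a i : ℤ) - (l : ℤ)) 0 ≤ (d : ℤ) - (l : ℤ)) :
    (Nat.card {se : (Fin n → ℕ) × (Fin n → ℕ) //
        (∑ i, se.1 i) + l = d ∧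
        (∀ i, se.1 i + l = se.2 i + a i) ∧
        (∀ i : Fin n, (i : ℕ) < n - 2 → se.1 i * se.2 i = 0)} : ℤ)
      = (d : ℤ) + 1 - (l : ℤ) - ∑ i, max ((a i : ℤ) - (l : ℤ)) 0 :=
  stmt8_general n hn d l a h
end

section
/- Let n ≥ 2 and let d, a_1, ..., a_n be non-negative integers with d ≥ a_1 + ... + a_n. Then the number of tuples (c, s_1,...,s_n, e_1,...,e_n) of non-negative integers satisfying c + s_1 + ... + s_n = d, s_i + c = e_i + a_i for all i = 1,...,n, and s_i·e_i = 0 for all i = 1,...,n−2, equals C(d+2, 2) − Σ_{i=1}^{n} C(a_i + 1, 2), where C(m, 2) = m(m−1)/2. -/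
/-!
Since `sᵢ + c = eᵢ + aᵢ`, each pair is `sᵢ = (aᵢ - c) + tᵢ`, `eᵢ = (c - aᵢ) + tᵢ` with
`tᵢ = min sᵢ eᵢ ≥ 0`, and `sᵢ eᵢ = 0` forces `tᵢ = 0`. So a tuple is determined by `c` and the
two free values `t_{n-1}, tₙ`, which must satisfy `t_{n-1} + tₙ = d - c - Σᵢ (aᵢ - c)⁺`;
for `c ≤ d` this is `≥ 0` because `d ≥ Σ aᵢ`. Summing the `d - c - Σᵢ (aᵢ - c)⁺ + 1` choices over
`0 ≤ c ≤ d` gives `C(d+2, 2) - Σᵢ Σ_c (aᵢ - c)⁺ = C(d+2, 2) - Σᵢ C(aᵢ+1, 2)`.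
-/

open Finset

theorem sum_range_tsub_self (m : ℕ) : ∑ c ∈ range m, (m - c) = (m + 1).choose 2 := by
  induction m with
  | zero => simp
  | succ m ih =>
    rw [sum_range_succ', Nat.choose_succ_succ' (m + 1), Nat.choose_one_right]
    simp only [Nat.add_sub_add_right, ih, Nat.sub_zero, Nat.add_comm]

theorem sum_range_tsub_of_le {m k : ℕ} (h : m ≤ k) :
    ∑ c ∈ range k, (m - c) = (m + 1).choose 2 := by
  rw [← sum_range_tsub_self, sum_subset (range_subset_range.2 h)]
  intro c _ hc
  rw [mem_range, not_lt] at hc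
  exact Nat.sub_eq_zero_of_le hc

theorem add_sum_tsub_le_max {ι : Type*} (s : Finset ι) (a : ι → ℕ) (c : ℕ) :
    c + ∑ i ∈ s, (a i - c) ≤ max c (∑ i ∈ s, a i) := by
  classical
  induction s using Finset.induction_on with
  | empty => simp
  | insert j s hj ih =>
    rw [sum_insert hj, sum_insert hj]
    omega

section TwoFreeIndices

variable {ι : Type*} [DecidableEq ι] (i₀ i₁ : ι) (a : ι → ℕ)

def solutionSet [Fintype ι] (d : ℕ) : Set (ℕ × (ι → ℕ) × (ι → ℕ)) :=
  {x | x.1 + ∑ i, x.2.1 i = d ∧ (∀ i, x.2.1 i + x.1 = x.2.2 i + a i) ∧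
    ∀ i, i ≠ i₀ → i ≠ i₁ → x.2.1 i * x.2.2 i = 0}

def tupleOfParam (x : Σ _ : ℕ, ℕ × ℕ) : ℕ × (ι → ℕ) × (ι → ℕ) :=
  let t : ι → ℕ := Pi.single i₀ x.2.1 + Pi.single i₁ x.2.2
  (x.1, fun i => (a i - x.1) + t i, fun i => (x.1 - a i) + t i)

variable {i₀ i₁}

theorem tupleOfParam_injective (hne : i₀ ≠ i₁) : Function.Injective (tupleOfParam i₀ i₁ a) := by
  rintro ⟨c, u, v⟩ ⟨c', u', v'⟩ h
  simp only [tupleOfParam, Prod.mk.injEq] at h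
  obtain ⟨rfl, hs, -⟩ := h
  have h₀ := congr_fun hs i₀
  have h₁ := congr_fun hs i₁
  simp only [Pi.add_apply, Pi.single_eq_same, Pi.single_eq_of_ne hne, Pi.single_eq_of_ne hne.symm,
    add_zero, zero_add, Nat.add_left_cancel_iff] at h₀ h₁
  rw [h₀, h₁]

variable [Fintype ι]

theorem solutionSet_eq_image (hne : i₀ ≠ i₁) {d : ℕ} (hd : ∑ i, a i ≤ d) :
    solutionSet i₀ i₁ a d = tupleOfParam i₀ i₁ a ''
      ((range (d + 1)).sigma fun c => antidiagonal (d - (c + ∑ i, (a i - c)))) := by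
  ext ⟨c, s, e⟩
  simp only [solutionSet, Set.mem_ofPred_eq, Set.mem_image, mem_coe, mem_sigma, mem_range,
    HasAntidiagonal.mem_antidiagonal, Sigma.exists]
  constructor
  · rintro ⟨hsum, hse, hfree⟩
    obtain ⟨t, ht_def⟩ : ∃ t : ι → ℕ, ∀ i, t i = min (s i) (e i) := ⟨_, fun _ => rfl⟩
    have hs : ∀ i, s i = (a i - c) + t i := fun i => by have := hse i; have := ht_def i; omega
    have he : ∀ i, e i = (c - a i) + t i := fun i => by have := hse i; have := ht_def i; omega
    have ht : ∀ i, i ≠ i₀ → i ≠ i₁ → t i = 0 := fun i h₀ h₁ => by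
      rcases Nat.mul_eq_zero.1 (hfree i h₀ h₁) with h | h <;> simp [ht_def, h]
    have ht_eq : t = Pi.single i₀ (t i₀) + Pi.single i₁ (t i₁) := by
      funext i
      by_cases h₀ : i = i₀
      · subst h₀; simp [hne]
      by_cases h₁ : i = i₁
      · subst h₁; simp [Ne.symm hne]
      simp [h₀, h₁, ht i h₀ h₁]
    have hsum_t : ∑ i, t i = t i₀ + t i₁ :=
      Fintype.sum_eq_add i₀ i₁ hne fun i ⟨h₀, h₁⟩ => ht i h₀ h₁
    have hsum_s : ∑ i, s i = ∑ i, (a i - c) + (t i₀ + t i₁) := by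
      rw [← hsum_t, ← sum_add_distrib]
      exact sum_congr rfl fun i _ => hs i
    refine ⟨c, (t i₀, t i₁), ⟨by omega, by omega⟩, ?_⟩
    simp only [tupleOfParam, ← ht_eq]
    exact Prod.ext rfl (Prod.ext (funext fun i => (hs i).symm) (funext fun i => (he i).symm))
  · rintro ⟨c, ⟨u, v⟩, ⟨hc, huv⟩, h⟩
    simp only [tupleOfParam, Prod.mk.injEq] at h
    obtain ⟨rfl, rfl, rfl⟩ := h
    have hkey := add_sum_tsub_le_max univ a c
    refine ⟨?_, fun i => by dsimp only; omega, fun i h₀ h₁ => ?_⟩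
    · simp only [Pi.add_apply, sum_add_distrib, sum_pi_single', mem_univ, ↓reduceIte]
      omega
    · simp only [Pi.add_apply, Pi.single_eq_of_ne h₀, Pi.single_eq_of_ne h₁, add_zero, mul_eq_zero]
      omega

theorem card_solutionSet (hne : i₀ ≠ i₁) {d : ℕ} (hd : ∑ i, a i ≤ d) :
    Nat.card (solutionSet i₀ i₁ a d) = ∑ c ∈ range (d + 1), (d - (c + ∑ i, (a i - c)) + 1) := by
  rw [solutionSet_eq_image a hne hd, Nat.card_image_of_injective (tupleOfParam_injective a hne),
    Nat.card_coe_set_eq, Set.ncard_coe_finset, card_sigma]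
  simp only [Nat.card_antidiagonal]

end TwoFreeIndices

/-- Let `n ≥ 2` and let `d, a₁, …, aₙ` be non-negative integers with `d ≥ a₁ + ⋯ + aₙ`.
Then the number of tuples `(c, s₁,…,sₙ, e₁,…,eₙ)` of non-negative integers with
`c + s₁ + ⋯ + sₙ = d`, `sᵢ + c = eᵢ + aᵢ` for all `i`, and `sᵢ·eᵢ = 0` for
`i = 1, …, n−2`, equals `C(d+2, 2) − Σᵢ C(aᵢ+1, 2)`. -/
theorem stmt9 (n : ℕ) (hn : 2 ≤ n) (d : ℕ) (a : Fin n → ℕ)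
    (hd : (∑ i, a i) ≤ d) :
    (Nat.card {cse : ℕ × (Fin n → ℕ) × (Fin n → ℕ) //
        cse.1 + (∑ i, cse.2.1 i) = d ∧
        (∀ i, cse.2.1 i + cse.1 = cse.2.2 i + a i) ∧
        (∀ i : Fin n, (i : ℕ) < n - 2 → cse.2.1 i * cse.2.2 i = 0)} : ℤ)
      = ((d + 2).choose 2 : ℤ) - ∑ i, (((a i) + 1).choose 2 : ℤ) := by
  set i₀ : Fin n := ⟨n - 2, by omega⟩
  set i₁ : Fin n := ⟨n - 1, by omega⟩
  have hfree : ∀ i : Fin n, (i : ℕ) < n - 2 ↔ i ≠ i₀ ∧ i ≠ i₁ := by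
    intro i
    simp only [ne_eq, Fin.ext_iff, i₀, i₁]
    omega
  simp_rw [hfree, and_imp]
  change ((Nat.card (solutionSet i₀ i₁ a d) : ℕ) : ℤ) = _
  rw [card_solutionSet a (by simp [i₀, i₁, Fin.ext_iff]; omega) hd, Nat.cast_sum]
  have hterm : ∀ c ∈ range (d + 1), ((d - (c + ∑ i, (a i - c)) + 1 : ℕ) : ℤ) =
      ((d + 1 - c : ℕ) : ℤ) - ∑ i, ((a i - c : ℕ) : ℤ) := by
    intro c hc
    have := add_sum_tsub_le_max univ a c
    rw [mem_range] at hc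
    rw [← Nat.cast_sum]
    omega
  rw [sum_congr rfl hterm, sum_sub_distrib, sum_comm, ← Nat.cast_sum,
    sum_range_tsub_of_le le_rfl]
  congr 1
  refine sum_congr rfl fun i _ => ?_
  have hai : a i ≤ ∑ j, a j := single_le_sum (fun j _ => Nat.zero_le (a j)) (mem_univ i)
  rw [← Nat.cast_sum, sum_range_tsub_of_le (by omega)]
end
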